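/- arXiv:1810.05453 — 4 statements merged into one kernel-verified Lean document; each statement's English description precedes it below -/
import Mathlib

section
/- Let s, t, p be points in the Euclidean plane with x(s) ≤ x(p) ≤ x(t), y(p) ≥ y(s), and y(p) ≥ y(t). Then (y(p) − y(s)) + (x(t) − x(s)) + (y(p) − y(t)) ≤ √2 · (dist(s,p) + dist(p,t)). -/
lemma aux_add_le_sqrt2 (a b : ℝ) (ha : 0 ≤ a) (hb : 0 ≤ b) :
    a + b ≤ Real.sqrt 2 * Real.sqrt (a ^ 2 + b ^ 2) := by
  have h2 : Real.sqrt 2 * Real.sqrt (a ^ 2 + b ^ 2) = Real.sqrt (2 * (a ^ 2 + b ^ 2)) := by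
    rw [← Real.sqrt_mul (by norm_num)]
  rw [h2]
  rw [show a + b ≤ Real.sqrt (2 * (a ^ 2 + b ^ 2)) ↔ _ from
    Real.le_sqrt (by positivity) (by positivity)]
  nlinarith [sq_nonneg (a - b)]

/-- Staircase path over an apex point `p`: if `x(s) ≤ x(p) ≤ x(t)` and `p` lies at or above
both `s` and `t`, then the staircase length `(y(p)−y(s)) + (x(t)−x(s)) + (y(p)−y(t))`
is at most `√2 * (dist s p + dist p t)`. -/
theorem staircase_le_sqrt_two_mul_apex_path
    (s t p : EuclideanSpace ℝ (Fin 2))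
    (hsp : s 0 ≤ p 0) (hpt : p 0 ≤ t 0) (hys : s 1 ≤ p 1) (hyt : t 1 ≤ p 1) :
    (p 1 - s 1) + (t 0 - s 0) + (p 1 - t 1) ≤ Real.sqrt 2 * (dist s p + dist p t) := by
  have d1 : dist s p = Real.sqrt ((p 0 - s 0) ^ 2 + (p 1 - s 1) ^ 2) := by
    rw [EuclideanSpace.dist_eq, Fin.sum_univ_two, Real.dist_eq, Real.dist_eq,
      sq_abs, sq_abs]
    ring_nf
  have d2 : dist p t = Real.sqrt ((t 0 - p 0) ^ 2 + (p 1 - t 1) ^ 2) := by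
    rw [EuclideanSpace.dist_eq, Fin.sum_univ_two, Real.dist_eq, Real.dist_eq,
      sq_abs, sq_abs]
    ring_nf
  have h1 := aux_add_le_sqrt2 (p 0 - s 0) (p 1 - s 1) (by linarith) (by linarith)
  have h2 := aux_add_le_sqrt2 (t 0 - p 0) (p 1 - t 1) (by linarith) (by linarith)
  rw [d1, d2]
  nlinarith [h1, h2]
end

section
/- Let p₀, p₁, …, p_k be finitely many points in the Euclidean plane such that the sequence of first coordinates x(p₀), …, x(p_k) is monotone and the sequence of second coordinates y(p₀), …, y(p_k) is monotone. Then the total length of the polygonal path through these points satisfies Σ_{i=0}^{k−1} dist(p_i, p_{i+1}) ≤ √2 · dist(p₀, p_k). -/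
/-!
Each coordinate of a monotone path changes in one direction only, so the coordinate
increments along the path add up without cancellation to the coordinate increments between
the endpoints. Hence the path length is at most the sum of the `ℓ¹` lengths of its segments,
which equals the `ℓ¹` distance of the endpoints, and by Cauchy–Schwarz this is at most
`√n` times their Euclidean distance in `ℝⁿ`.
-/

open Finset

theorem Fin.sum_univ_succ_sub_castSucc {M : Type*} [AddCommGroup M] :
    ∀ {k : ℕ} (f : Fin (k + 1) → M),
      ∑ i : Fin k, (f i.succ - f i.castSucc) = f (Fin.last k) - f 0
  | 0, f => by simp
  | k + 1, f => by
    rw [Fin.sum_univ_castSucc]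
    simp only [Fin.succ_castSucc]
    rw [Fin.sum_univ_succ_sub_castSucc (fun i => f i.castSucc)]
    simp only [Fin.castSucc_zero, Fin.succ_last]
    abel

section Monotone

variable {α : Type*} [AddCommGroup α] [LinearOrder α] [IsOrderedAddMonoid α] {k : ℕ}
  {f : Fin (k + 1) → α}

theorem Monotone.sum_abs_succ_sub_castSucc (hf : Monotone f) :
    ∑ i : Fin k, |f i.succ - f i.castSucc| = |f (Fin.last k) - f 0| := by
  rw [abs_of_nonneg (sub_nonneg.2 (hf (Fin.zero_le _))), ← Fin.sum_univ_succ_sub_castSucc]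
  exact sum_congr rfl fun i _ => abs_of_nonneg (sub_nonneg.2 (hf i.castSucc_le_succ))

theorem Antitone.sum_abs_succ_sub_castSucc (hf : Antitone f) :
    ∑ i : Fin k, |f i.succ - f i.castSucc| = |f (Fin.last k) - f 0| := by
  simpa only [Pi.neg_apply, neg_sub_neg, abs_sub_comm] using hf.neg.sum_abs_succ_sub_castSucc

end Monotone

namespace EuclideanSpace

variable {ι : Type*} [Fintype ι]

theorem dist_le_sum_abs_sub (x y : EuclideanSpace ℝ ι) : dist x y ≤ ∑ i, |x i - y i| := by
  rw [EuclideanSpace.dist_eq, Real.sqrt_le_iff]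
  refine ⟨by positivity, ?_⟩
  simpa only [Real.dist_eq, sq_abs] using
    sum_sq_le_sq_sum_of_nonneg (s := univ) fun i _ => abs_nonneg (x i - y i)

theorem sum_abs_sub_le_sqrt_card_mul_dist (x y : EuclideanSpace ℝ ι) :
    ∑ i, |x i - y i| ≤ √(Fintype.card ι) * dist x y := by
  rw [EuclideanSpace.dist_eq, ← Real.sqrt_mul (Nat.cast_nonneg _),
    Real.le_sqrt (by positivity) (by positivity)]
  simpa only [Real.dist_eq, sq_abs, card_univ] using
    sq_sum_le_card_mul_sum_sq (s := univ) (f := fun i => |x i - y i|)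

theorem sum_dist_le_sqrt_card_mul_dist_of_monotone {k : ℕ} (p : Fin (k + 1) → EuclideanSpace ℝ ι)
    (hp : ∀ j, Monotone (fun i => p i j) ∨ Antitone (fun i => p i j)) :
    ∑ i : Fin k, dist (p i.castSucc) (p i.succ) ≤
      √(Fintype.card ι) * dist (p 0) (p (Fin.last k)) :=
  calc ∑ i : Fin k, dist (p i.castSucc) (p i.succ)
      ≤ ∑ i : Fin k, ∑ j, |p i.succ j - p i.castSucc j| :=
        sum_le_sum fun i _ => by rw [dist_comm]; exact dist_le_sum_abs_sub _ _
    _ = ∑ j, |p (Fin.last k) j - p 0 j| := by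
        rw [sum_comm]
        refine sum_congr rfl fun j _ => ?_
        rcases hp j with hj | hj
        exacts [hj.sum_abs_succ_sub_castSucc, hj.sum_abs_succ_sub_castSucc]
    _ ≤ √(Fintype.card ι) * dist (p 0) (p (Fin.last k)) := by
        rw [dist_comm]; exact sum_abs_sub_le_sqrt_card_mul_dist _ _

end EuclideanSpace

/-- An `x`- and `y`-monotone polygonal path has total length at most `√2` times the
Euclidean distance between its endpoints. -/
theorem monotone_path_length_le_sqrt_two_mul_dist
    (k : ℕ) (p : Fin (k + 1) → EuclideanSpace ℝ (Fin 2))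
    (hx : Monotone (fun i => p i 0) ∨ Antitone (fun i => p i 0))
    (hy : Monotone (fun i => p i 1) ∨ Antitone (fun i => p i 1)) :
    ∑ i : Fin k, dist (p i.castSucc) (p i.succ) ≤
      Real.sqrt 2 * dist (p 0) (p (Fin.last k)) := by
  simpa using
    EuclideanSpace.sum_dist_le_sqrt_card_mul_dist_of_monotone p (Fin.forall_fin_two.2 ⟨hx, hy⟩)
end

section
/- Let K be a nonempty compact connected subset of the Euclidean plane, and set x⁻ = inf{x(p) : p ∈ K}, x⁺ = sup{x(p) : p ∈ K}, y⁻ = inf{y(p) : p ∈ K}, y⁺ = sup{y(p) : p ∈ K}. Let γ : [0,1] → ℝ² be a continuous path whose image is disjoint from K and which satisfies x(γ(0)) < x⁻ and x(γ(1)) > x⁺. Then there exists τ ∈ [0,1] with x⁻ ≤ x(γ(τ)) ≤ x⁺ and either y(γ(τ)) ≥ y⁺ or y(γ(τ)) ≤ y⁻. -/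
/-!
Suppose the path never passes over or under the box. Thicken `K` to a path-connected open set `U`
that still misses the path and lies horizontally strictly between `γ 0` and `γ 1`. Going straight
down from a lowest point of `K`, through `U`, and straight up from a highest point gives a barrier
path from below the whole of `γ` to above it, squeezed horizontally between the endpoints of `γ`.
Two such paths must meet: by the two-dimensional Poincaré–Miranda theorem, proved by lifting
`γ s - τ t` through `exp` on the square and comparing the change of its argument along the four
sides. The meeting point lies neither in `U` nor on the vertical segments, where `γ` would be at
or below the bottom, or at or above the top, of the box.
-/

open Complex Set Metric

theorem IsPreconnected.sub_eq_sub_of_exp_eq {X : Type*} [TopologicalSpace X] {S : Set X}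
    (hS : IsPreconnected S) {g₁ g₂ : X → ℂ} (hg₁ : ContinuousOn g₁ S) (hg₂ : ContinuousOn g₂ S)
    (h : ∀ z ∈ S, exp (g₁ z) = exp (g₂ z)) {x y : X} (hx : x ∈ S) (hy : y ∈ S) :
    g₁ y - g₁ x = g₂ y - g₂ x := by
  have hmaps : MapsTo (fun z ↦ g₁ z - g₂ z) S (AddSubgroup.zmultiples (2 * Real.pi * I)) := by
    intro z hz
    have : exp (g₁ z - g₂ z) = 1 := by rw [exp_sub, h z hz, div_self (exp_ne_zero _)]
    obtain ⟨n, hn⟩ := exp_eq_one_iff.mp this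
    exact AddSubgroup.mem_zmultiples_iff.mpr ⟨n, by rw [zsmul_eq_mul, ← hn]⟩
  have := hS.constant_of_mapsTo (SetLike.isDiscrete_iff_discreteTopology.mpr inferInstance)
    (hg₁.sub hg₂) hmaps hy hx
  simp only [Pi.sub_apply] at this
  linear_combination this

theorem IsPreconnected.im_sub_eq_arg_sub {X : Type*} [TopologicalSpace X] {S : Set X}
    (hS : IsPreconnected S) {g : X → ℂ} (hg : ContinuousOn g S) {u : ℂ}
    (hu : ∀ z ∈ S, 0 < (u * exp (g z)).re) {x y : X} (hx : x ∈ S) (hy : y ∈ S) :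
    (g y).im - (g x).im = arg (u * exp (g y)) - arg (u * exp (g x)) := by
  have hslit : ∀ z ∈ S, u * exp (g z) ∈ slitPlane := fun z hz ↦ .inl (hu z hz)
  have hu0 : u ≠ 0 := by
    rintro rfl
    obtain ⟨z, hz⟩ : S.Nonempty := ⟨x, hx⟩
    simpa using hu z hz
  have key := hS.sub_eq_sub_of_exp_eq hg
    (g₂ := fun z ↦ log (u * exp (g z)) - log u)
    (((continuousOn_const.mul hg.cexp).clog hslit).sub continuousOn_const)
    (fun z hz ↦ by
      rw [exp_sub, exp_log (mul_ne_zero hu0 (exp_ne_zero _)), exp_log hu0,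
        mul_div_cancel_left₀ _ hu0]) hx hy
  simpa [log_im] using congrArg im key

theorem ContinuousMap.exists_exp_eq {X : Type*} [TopologicalSpace X] [SimplyConnectedSpace X]
    [LocallyPathConnectedSpace X] (f : C(X, ℂ)) (hf : ∀ x, f x ≠ 0) :
    ∃ g : C(X, ℂ), ∀ x, exp (g x) = f x := by
  obtain ⟨x₀⟩ := (inferInstance : Nonempty X)
  obtain ⟨g, -, hg⟩ := (isCoveringMapOn_exp.existsUnique_continuousMap_lifts f
    (exp_log (hf x₀)) hf).exists
  exact ⟨g, congrFun hg⟩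

theorem exists_continuous_exp_eq_on_unitSquare {F : ℝ × ℝ → ℂ}
    (hF : ContinuousOn F (Icc 0 1 ×ˢ Icc 0 1))
    (hF0 : ∀ p ∈ Icc (0 : ℝ) 1 ×ˢ Icc (0 : ℝ) 1, F p ≠ 0) :
    ∃ G : C(ℝ × ℝ, ℂ), ∀ p ∈ Icc (0 : ℝ) 1 ×ˢ Icc (0 : ℝ) 1, exp (G p) = F p := by
  let clamp : ℝ × ℝ → ℝ × ℝ := fun p ↦ (projIcc 0 1 zero_le_one p.1, projIcc 0 1 zero_le_one p.2)
  have hclamp : ∀ p, clamp p ∈ Icc (0 : ℝ) 1 ×ˢ Icc (0 : ℝ) 1 :=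
    fun p ↦ ⟨Subtype.prop _, Subtype.prop _⟩
  obtain ⟨G, hG⟩ := ContinuousMap.exists_exp_eq
    ⟨F ∘ clamp, hF.comp_continuous (by fun_prop) hclamp⟩ (fun p ↦ hF0 _ (hclamp p))
  exact ⟨G, fun p hp ↦ by simpa [clamp, projIcc_of_mem _ hp.1, projIcc_of_mem _ hp.2] using hG p⟩

theorem exists_mem_unitSquare_eq_zero {F : ℝ × ℝ → ℂ}
    (hF : ContinuousOn F (Icc 0 1 ×ˢ Icc 0 1))
    (hleft : ∀ t ∈ Icc (0 : ℝ) 1, (F (0, t)).re < 0)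
    (hright : ∀ t ∈ Icc (0 : ℝ) 1, 0 < (F (1, t)).re)
    (hbot : ∀ s ∈ Icc (0 : ℝ) 1, 0 < (F (s, 0)).im)
    (htop : ∀ s ∈ Icc (0 : ℝ) 1, (F (s, 1)).im < 0) :
    ∃ p ∈ Icc (0 : ℝ) 1 ×ˢ Icc (0 : ℝ) 1, F p = 0 := by
  by_contra! hF0
  set Q := Icc (0 : ℝ) 1 ×ˢ Icc (0 : ℝ) 1
  obtain ⟨G, hGF⟩ := exists_continuous_exp_eq_on_unitSquare hF hF0
  have edge : ∀ {S : Set (ℝ × ℝ)}, S ⊆ Q → IsPreconnected S → ∀ u : ℂ,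
      (∀ z ∈ S, 0 < (u * F z).re) → ∀ x ∈ S, ∀ y ∈ S,
      (G y).im - (G x).im = arg (u * F y) - arg (u * F x) := by
    intro S hSQ hS u hu x hx y hy
    rw [← hGF x (hSQ hx), ← hGF y (hSQ hy)]
    exact hS.im_sub_eq_arg_sub G.continuous.continuousOn
      (fun z hz ↦ hGF z (hSQ hz) ▸ hu z hz) hx hy
  have h0 : (0 : ℝ) ∈ Icc (0 : ℝ) 1 := left_mem_Icc.mpr zero_le_one
  have h1 : (1 : ℝ) ∈ Icc (0 : ℝ) 1 := right_mem_Icc.mpr zero_le_one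
  have bottom := edge (prod_mono le_rfl (singleton_subset_iff.mpr h0))
    (isPreconnected_Icc.prod isPreconnected_singleton) (-I)
    (by rintro ⟨s, _⟩ ⟨hs, rfl⟩; simpa using hbot s hs)
    (0, 0) ⟨h0, rfl⟩ (1, 0) ⟨h1, rfl⟩
  have right := edge (prod_mono (singleton_subset_iff.mpr h1) le_rfl)
    (isPreconnected_singleton.prod isPreconnected_Icc) 1
    (by rintro ⟨_, t⟩ ⟨rfl, ht⟩; simpa using hright t ht)
    (1, 0) ⟨rfl, h0⟩ (1, 1) ⟨rfl, h1⟩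
  have top := edge (prod_mono le_rfl (singleton_subset_iff.mpr h1))
    (isPreconnected_Icc.prod isPreconnected_singleton) I
    (by rintro ⟨s, _⟩ ⟨hs, rfl⟩; simpa using htop s hs)
    (0, 1) ⟨h0, rfl⟩ (1, 1) ⟨h1, rfl⟩
  have left := edge (prod_mono (singleton_subset_iff.mpr h0) le_rfl)
    (isPreconnected_singleton.prod isPreconnected_Icc) (-1)
    (by rintro ⟨_, t⟩ ⟨rfl, ht⟩; simpa using hleft t ht)
    (0, 0) ⟨rfl, h0⟩ (0, 1) ⟨rfl, h1⟩
  -- Along each edge `Im G` moves by a signed amount fixed by the boundary conditions, and the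
  -- four moves around the square cannot add up to zero.
  have hB₁ : arg (-I * F (1, 0)) < 0 := arg_neg_iff.mpr (by simpa using hright 0 h0)
  have hA₁ : 0 ≤ arg (-I * F (0, 0)) := arg_nonneg_iff.mpr (by simpa using (hleft 0 h0).le)
  have hD₂ : arg (1 * F (1, 1)) < 0 := arg_neg_iff.mpr (by simpa using htop 1 h1)
  have hB₂ : 0 ≤ arg (1 * F (1, 0)) := arg_nonneg_iff.mpr (by simpa using (hbot 1 h1).le)
  have hD₃ : 0 ≤ arg (I * F (1, 1)) := arg_nonneg_iff.mpr (by simpa using (hright 1 h1).le)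
  have hC₃ : arg (I * F (0, 1)) < 0 := arg_neg_iff.mpr (by simpa using hleft 1 h1)
  have hC₄ : 0 ≤ arg (-1 * F (0, 1)) := arg_nonneg_iff.mpr (by simpa using (htop 0 h0).le)
  have hA₄ : arg (-1 * F (0, 0)) < 0 := arg_neg_iff.mpr (by simpa using hbot 0 h0)
  linarith

theorem exists_eq_of_crossing {γ τ : ℝ → EuclideanSpace ℝ (Fin 2)}
    (hγ : ContinuousOn γ (Icc 0 1)) (hτ : ContinuousOn τ (Icc 0 1))
    (hleft : ∀ t ∈ Icc (0 : ℝ) 1, γ 0 0 < τ t 0) (hright : ∀ t ∈ Icc (0 : ℝ) 1, τ t 0 < γ 1 0)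
    (hbot : ∀ s ∈ Icc (0 : ℝ) 1, τ 0 1 < γ s 1) (htop : ∀ s ∈ Icc (0 : ℝ) 1, γ s 1 < τ 1 1) :
    ∃ s ∈ Icc (0 : ℝ) 1, ∃ t ∈ Icc (0 : ℝ) 1, γ s = τ t := by
  have hγ' : ContinuousOn (fun p : ℝ × ℝ ↦ γ p.1) (Icc 0 1 ×ˢ Icc 0 1) :=
    hγ.comp continuousOn_fst fun _ hp ↦ hp.1
  have hτ' : ContinuousOn (fun p : ℝ × ℝ ↦ τ p.2) (Icc 0 1 ×ˢ Icc 0 1) :=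
    hτ.comp continuousOn_snd fun _ hp ↦ hp.2
  set e := Complex.orthonormalBasisOneI.repr.symm
  obtain ⟨⟨s, t⟩, ⟨hs, ht⟩, hst⟩ := exists_mem_unitSquare_eq_zero
    (F := fun p ↦ e (γ p.1 - τ p.2)) (e.continuous.comp_continuousOn (hγ'.sub hτ'))
    (fun t ht ↦ by simpa [e] using hleft t ht) (fun t ht ↦ by simpa [e] using hright t ht)
    (fun s hs ↦ by simpa [e] using hbot s hs) (fun s hs ↦ by simpa [e] using htop s hs)
  exact ⟨s, hs, t, ht, sub_eq_zero.mp ((map_eq_zero_iff e e.injective).mp hst)⟩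

theorem EuclideanSpace.apply_mem_uIcc_of_mem_segment {ι : Type*} {u v w : EuclideanSpace ℝ ι}
    (hw : w ∈ segment ℝ u v) (i : ι) : w i ∈ uIcc (u i) (v i) := by
  let f := (EuclideanSpace.proj i : _ →L[ℝ] ℝ).toLinearMap.toAffineMap
  rw [← segment_eq_uIcc]
  simpa [f] using image_segment ℝ f u v ▸ mem_image_of_mem f hw

theorem EuclideanSpace.mem_segment_vertical {p b : EuclideanSpace ℝ (Fin 2)} {y : ℝ}
    (hb : b ∈ segment ℝ !₂[p 0, y] p) : b 0 = p 0 ∧ b 1 ∈ uIcc y (p 1) := by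
  have hb₀ := apply_mem_uIcc_of_mem_segment hb 0
  have hb₁ := apply_mem_uIcc_of_mem_segment hb 1
  simp only [Matrix.cons_val_zero, Matrix.cons_val_one, Matrix.cons_val_fin_one, uIcc_self,
    mem_singleton_iff] at hb₀ hb₁
  exact ⟨hb₀, hb₁⟩

theorem exists_mem_vertical_ray_of_crossing {U : Set (EuclideanSpace ℝ (Fin 2))}
    (hU : IsPathConnected U) {p q : EuclideanSpace ℝ (Fin 2)} (hp : p ∈ U) (hq : q ∈ U)
    {γ : ℝ → EuclideanSpace ℝ (Fin 2)} (hγ : ContinuousOn γ (Icc 0 1))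
    (hleft : ∀ u ∈ U, γ 0 0 < u 0) (hright : ∀ u ∈ U, u 0 < γ 1 0)
    (hUγ : ∀ s ∈ Icc (0 : ℝ) 1, γ s ∉ U) :
    ∃ s ∈ Icc (0 : ℝ) 1, (γ s 0 = p 0 ∧ γ s 1 ≤ p 1) ∨ (γ s 0 = q 0 ∧ q 1 ≤ γ s 1) := by
  by_contra! h
  have hγ₁ : ContinuousOn (fun s ↦ γ s 1) (Icc 0 1) := by fun_prop
  obtain ⟨m, hm⟩ := isCompact_Icc.bddBelow_image hγ₁
  obtain ⟨M, hM⟩ := isCompact_Icc.bddAbove_image hγ₁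
  set p' : EuclideanSpace ℝ (Fin 2) := !₂[p 0, min m (p 1) - 1]
  set q' : EuclideanSpace ℝ (Fin 2) := !₂[q 0, max M (q 1) + 1]
  set B := segment ℝ p' p ∪ U ∪ segment ℝ q' q
  have hB : IsPathConnected B :=
    (((convex_segment p' p).isPathConnected ⟨p, right_mem_segment ℝ p' p⟩).union hU
      ⟨p, right_mem_segment ℝ p' p, hp⟩).union
      ((convex_segment q' q).isPathConnected ⟨q, right_mem_segment ℝ q' q⟩)
      ⟨q, .inr hq, right_mem_segment ℝ q' q⟩
  have hBγ : ∀ b ∈ B, (γ 0 0 < b 0 ∧ b 0 < γ 1 0) ∧ ∀ s ∈ Icc (0 : ℝ) 1, γ s ≠ b := by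
    rintro b ((hb | hb) | hb)
    · obtain ⟨hb₀, hb₁⟩ := EuclideanSpace.mem_segment_vertical hb
      rw [uIcc_of_le (by linarith [min_le_right m (p 1)])] at hb₁
      refine ⟨hb₀ ▸ ⟨hleft p hp, hright p hp⟩, fun s hs hsb ↦ ?_⟩
      linarith [hsb ▸ (h s hs).1 (by rw [hsb, hb₀]), hb₁.2]
    · exact ⟨⟨hleft b hb, hright b hb⟩, fun s hs hsb ↦ hUγ s hs (hsb ▸ hb)⟩
    · obtain ⟨hb₀, hb₁⟩ := EuclideanSpace.mem_segment_vertical hb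
      rw [uIcc_of_ge (by linarith [le_max_right M (q 1)])] at hb₁
      refine ⟨hb₀ ▸ ⟨hleft q hq, hright q hq⟩, fun s hs hsb ↦ ?_⟩
      linarith [hsb ▸ (h s hs).2 (by rw [hsb, hb₀]), hb₁.1]
  have hjoin := hB.joinedIn p' (.inl (.inl (left_mem_segment ℝ p' p))) q'
    (.inr (left_mem_segment ℝ q' q))
  have hτB : ∀ t, hjoin.somePath.extend t ∈ B := fun t ↦ hjoin.somePath_mem _
  obtain ⟨s, hs, t, -, hst⟩ := exists_eq_of_crossing hγ
    hjoin.somePath.continuous_extend.continuousOn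
    (fun t _ ↦ (hBγ _ (hτB t)).1.1) (fun t _ ↦ (hBγ _ (hτB t)).1.2)
    (fun s hs ↦ by
      simp only [Path.extend_zero, p', Matrix.cons_val_one, Matrix.cons_val_fin_one]
      linarith [hm ⟨s, hs, rfl⟩, min_le_left m (p 1)])
    (fun s hs ↦ by
      simp only [Path.extend_one, q', Matrix.cons_val_one, Matrix.cons_val_fin_one]
      linarith [hM ⟨s, hs, rfl⟩, le_max_left M (q 1)])
  exact (hBγ _ (hτB t)).2 s hs hst

theorem IsConnected.thickening {E : Type*} [NormedAddCommGroup E] [NormedSpace ℝ E]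
    {s : Set E} (hs : IsConnected s) {δ : ℝ} (hδ : 0 < δ) : IsConnected (thickening δ s) := by
  rw [← add_ball_zero, ← image2_add, ← image_prod]
  exact (hs.prod (isConnected_ball hδ)).image (fun x : E × E ↦ x.1 + x.2)
    (continuous_fst.add continuous_snd).continuousOn

theorem IsConnected.exists_isPathConnected_superset_disjoint {E : Type*} [NormedAddCommGroup E]
    [NormedSpace ℝ E] {K C : Set E} (hK : IsConnected K) (hKc : IsCompact K) (hC : IsClosed C)
    (hKC : Disjoint K C) {ε : ℝ} (hε : 0 < ε) :
    ∃ U, IsPathConnected U ∧ K ⊆ U ∧ Disjoint U C ∧ U ⊆ Metric.thickening ε K := by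
  obtain ⟨δ, hδ, hdisj⟩ := hKC.exists_thickenings hKc hC
  have hδε : 0 < min δ ε := lt_min hδ hε
  refine ⟨Metric.thickening (min δ ε) K, ?_, self_subset_thickening hδε K, ?_,
    thickening_mono (min_le_right _ _) K⟩
  · exact isOpen_thickening.isConnected_iff_isPathConnected.mp (hK.thickening hδε)
  · exact (hdisj.mono_left (thickening_mono (min_le_left _ _) K)).mono_right
      (self_subset_thickening hδ C)

theorem path_avoiding_compact_passes_over_or_under_general
    (K : Set (EuclideanSpace ℝ (Fin 2)))
    (hcpt : IsCompact K) (hconn : IsConnected K)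
    (xlo xhi ylo yhi : ℝ)
    (hxlo : xlo = sInf ((fun p : EuclideanSpace ℝ (Fin 2) => p 0) '' K))
    (hxhi : xhi = sSup ((fun p : EuclideanSpace ℝ (Fin 2) => p 0) '' K))
    (hylo : ylo = sInf ((fun p : EuclideanSpace ℝ (Fin 2) => p 1) '' K))
    (hyhi : yhi = sSup ((fun p : EuclideanSpace ℝ (Fin 2) => p 1) '' K))
    (γ : ℝ → EuclideanSpace ℝ (Fin 2))
    (hγ : ContinuousOn γ (Set.Icc 0 1))
    (hdisj : ∀ τ ∈ Set.Icc (0 : ℝ) 1, γ τ ∉ K)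
    (h0 : γ 0 0 < xlo) (h1 : xhi < γ 1 0) :
    ∃ τ ∈ Set.Icc (0 : ℝ) 1,
      xlo ≤ γ τ 0 ∧ γ τ 0 ≤ xhi ∧ (yhi ≤ γ τ 1 ∨ γ τ 1 ≤ ylo) := by
  have hKx : ∀ p ∈ K, xlo ≤ p 0 ∧ p 0 ≤ xhi := fun p hp ↦
    ⟨hxlo ▸ csInf_le (hcpt.image (by fun_prop)).bddBelow (mem_image_of_mem _ hp),
      hxhi ▸ le_csSup (hcpt.image (by fun_prop)).bddAbove (mem_image_of_mem _ hp)⟩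
  obtain ⟨pbot, hpbot, hylo'⟩ : ∃ p ∈ K, p 1 = ylo :=
    hylo ▸ (hcpt.image (by fun_prop)).sInf_mem (hconn.nonempty.image _)
  obtain ⟨ptop, hptop, hyhi'⟩ : ∃ p ∈ K, p 1 = yhi :=
    hyhi ▸ (hcpt.image (by fun_prop)).sSup_mem (hconn.nonempty.image _)
  obtain ⟨U, hU, hKU, hUγ, hUK⟩ := hconn.exists_isPathConnected_superset_disjoint hcpt
    (isCompact_Icc.image_of_continuousOn hγ).isClosed
    (disjoint_left.mpr fun p hpK ⟨s, hs, hsp⟩ ↦ hdisj s hs (hsp ▸ hpK))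
    (lt_min (sub_pos.mpr h0) (sub_pos.mpr h1))
  have hUx : ∀ u ∈ U, γ 0 0 < u 0 ∧ u 0 < γ 1 0 := fun u hu ↦ by
    obtain ⟨p, hp, hup⟩ := mem_thickening_iff.mp (hUK hu)
    have hup₀ := (PiLp.dist_apply_le u p 0).trans_lt hup
    rw [Real.dist_eq, abs_lt] at hup₀
    constructor <;> linarith [hKx p hp, min_le_left (xlo - γ 0 0) (γ 1 0 - xhi),
      min_le_right (xlo - γ 0 0) (γ 1 0 - xhi)]
  obtain ⟨s, hs, h | h⟩ := exists_mem_vertical_ray_of_crossing hU (hKU hpbot) (hKU hptop) hγ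
    (fun u hu ↦ (hUx u hu).1) (fun u hu ↦ (hUx u hu).2)
    (fun s hs hsU ↦ disjoint_left.mp hUγ hsU (mem_image_of_mem γ hs))
  · exact ⟨s, hs, h.1 ▸ (hKx pbot hpbot).1, h.1 ▸ (hKx pbot hpbot).2, .inr (hylo' ▸ h.2)⟩
  · exact ⟨s, hs, h.1 ▸ (hKx ptop hptop).1, h.1 ▸ (hKx ptop hptop).2, .inl (hyhi' ▸ h.2)⟩

/-- Any continuous path avoiding a nonempty compact connected set `K` that goes from
strictly left of `K`'s bounding box to strictly right of it must, at some moment whose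
`x`-coordinate lies within the box's horizontal range, be at or above the top of the box
or at or below its bottom. -/
theorem path_avoiding_compact_passes_over_or_under
    (K : Set (EuclideanSpace ℝ (Fin 2)))
    (hne : K.Nonempty) (hcpt : IsCompact K) (hconn : IsConnected K)
    (xlo xhi ylo yhi : ℝ)
    (hxlo : xlo = sInf ((fun p : EuclideanSpace ℝ (Fin 2) => p 0) '' K))
    (hxhi : xhi = sSup ((fun p : EuclideanSpace ℝ (Fin 2) => p 0) '' K))
    (hylo : ylo = sInf ((fun p : EuclideanSpace ℝ (Fin 2) => p 1) '' K))
    (hyhi : yhi = sSup ((fun p : EuclideanSpace ℝ (Fin 2) => p 1) '' K))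
    (γ : ℝ → EuclideanSpace ℝ (Fin 2))
    (hγ : ContinuousOn γ (Set.Icc 0 1))
    (hdisj : ∀ τ ∈ Set.Icc (0 : ℝ) 1, γ τ ∉ K)
    (h0 : γ 0 0 < xlo) (h1 : xhi < γ 1 0) :
    ∃ τ ∈ Set.Icc (0 : ℝ) 1,
      xlo ≤ γ τ 0 ∧ γ τ 0 ≤ xhi ∧ (yhi ≤ γ τ 1 ∨ γ τ 1 ≤ ylo) :=
  path_avoiding_compact_passes_over_or_under_general K hcpt hconn xlo xhi ylo yhi hxlo hxhi hylo
    hyhi γ hγ hdisj h0 h1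
end

section
/- Let K be a nonempty compact connected subset of the Euclidean plane with x⁻ = inf{x(p) : p ∈ K}, x⁺ = sup{x(p) : p ∈ K}, y⁻ = inf{y(p) : p ∈ K}, y⁺ = sup{y(p) : p ∈ K}. Let s, t be points with x(s) < x⁻, x(t) > x⁺, y⁻ ≤ y(s) ≤ y⁺ and y⁻ ≤ y(t) ≤ y⁺. Then for every continuous path γ : [0,1] → ℝ² from s to t whose image is disjoint from K and whose length (total variation) is L, the shorter of the two staircase paths over the top edge or under the bottom edge of the bounding box satisfies min( (y⁺ − y(s)) + (x(t) − x(s)) + (y⁺ − y(t)) , (y(s) − y⁻) + (x(t) − x(s)) + (y(t) − y⁻) ) ≤ √2 · L. Moreover, each of these two staircase paths avoids the interior of the bounding box [x⁻,x⁺] × [y⁻,y⁺]. -/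
/-!
If the path reaches a height `≥ y⁺` or `≤ y⁻` at some point `p`, its length is at least
`|sp| + |pt|`; as the `ℓ¹` norm is at most `√2` times the Euclidean one, the staircase over that
edge is no longer than `√2 L`.

Otherwise the path runs in the open strip `y⁻ < y < y⁺` from the left of `K` to its right, while
the continuum `K` touches both lines of the strip; this is impossible. Sample the path so finely
that consecutive samples `pᵢ` are closer to each other than to `K`. Then the total turning angle
`∑ arg ((pᵢ₊₁ - z) / (pᵢ - z))` is continuous in `z ∈ K`, positive at a top point of `K` and
negative at a bottom one, hence vanishes at some `z ∈ K`. But a vanishing turning angle makes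
`p_N - z` a positive multiple of `p₀ - z`, although `p₀` lies left and `p_N` right of `z`.
-/

noncomputable def planePt (a b : ℝ) : EuclideanSpace ℝ (Fin 2) := WithLp.toLp 2 ![a, b]

def closedBox (xlo xhi ylo yhi : ℝ) : Set (EuclideanSpace ℝ (Fin 2)) :=
  {p | xlo ≤ p 0 ∧ p 0 ≤ xhi ∧ ylo ≤ p 1 ∧ p 1 ≤ yhi}

@[simp]
theorem planePt_zero (a b : ℝ) : planePt a b 0 = a := rfl

@[simp]
theorem planePt_one (a b : ℝ) : planePt a b 1 = b := rfl

open Finset Real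

theorem exists_nat_dist_sample_lt_dist {X : Type*} [PseudoMetricSpace X] {g : ℝ → X} {S : Set X}
    (hg : ContinuousOn g (Set.Icc 0 1)) (hS : IsClosed S)
    (hgS : ∀ τ ∈ Set.Icc (0 : ℝ) 1, g τ ∉ S) :
    ∃ N : ℕ, 0 < N ∧ ∀ i < N, ∀ z ∈ S,
      dist (g ((i + 1 : ℕ) / N)) (g (i / N)) < dist (g (i / N)) z := by
  obtain ⟨r, hr, hrS⟩ := Metric.exists_pos_forall_lt_edist (isCompact_Icc.image_of_continuousOn hg)
    hS (Set.disjoint_left.2 fun _ ⟨τ, hτ, hgτ⟩ => hgτ ▸ hgS τ hτ)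
  obtain ⟨η, hη, hgη⟩ := Metric.uniformContinuousOn_iff.1
    (isCompact_Icc.uniformContinuousOn_of_continuous hg) r hr
  obtain ⟨n, hn⟩ := exists_nat_one_div_lt hη
  have hmem {i : ℕ} (hi : i ≤ n + 1) : (i / (n + 1 : ℕ) : ℝ) ∈ Set.Icc 0 1 :=
    ⟨by positivity, div_le_one_of_le₀ (by exact_mod_cast hi) (by positivity)⟩
  refine ⟨n + 1, n.succ_pos, fun i hi z hz => ?_⟩
  have hstep : dist ((i + 1 : ℕ) / (n + 1 : ℕ) : ℝ) (i / (n + 1 : ℕ)) < η := by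
    rw [Real.dist_eq, ← sub_div, abs_div]
    push_cast
    simpa [abs_of_pos (by positivity : (0 : ℝ) < n + 1)] using hn
  have hrz := hrS _ ⟨_, hmem hi.le, rfl⟩ z hz
  rw [edist_nndist, ENNReal.coe_lt_coe, ← NNReal.coe_lt_coe, coe_nndist] at hrz
  exact (hgη _ (hmem hi) _ (hmem hi.le) hstep).trans hrz

namespace Complex

theorem arg_div_eq_sub_arg {x y : ℂ} (hx : x ≠ 0) (hy : y ≠ 0)
    (h : arg x - arg y ∈ Set.Ioc (-π) π) : arg (x / y) = arg x - arg y := by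
  rw [← Real.Angle.toReal_coe_eq_self_iff_mem_Ioc.2 h, Real.Angle.coe_sub,
    ← arg_div_coe_angle hx hy, arg_coe_angle_toReal_eq_arg]

theorem re_div_pos_of_norm_sub_lt {u w : ℂ} (h : ‖u - w‖ < ‖w‖) : 0 < (u / w).re := by
  have hw : w ≠ 0 := norm_pos_iff.mp ((norm_nonneg _).trans_lt h)
  have hlt : |((u - w) / w).re| < 1 :=
    (abs_re_le_norm _).trans_lt (by rwa [norm_div, div_lt_one (norm_pos_iff.mpr hw)])
  have : u / w = 1 + (u - w) / w := by field_simp; ring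
  rw [this, add_re, one_re]
  linarith [(abs_lt.mp hlt).1]

/-- The angle swept around `0` by the polygon `v 0, …, v N`, provided each step turns by less
than `π`. -/
noncomputable def discreteWinding (v : ℕ → ℂ) (N : ℕ) : ℝ :=
  ∑ i ∈ range N, arg (v (i + 1) / v i)

theorem div_eq_norm_mul_exp_discreteWinding {v : ℕ → ℂ} {N : ℕ} (hv : ∀ i ≤ N, v i ≠ 0) :
    v N / v 0 = ‖v N / v 0‖ * exp (discreteWinding v N * I) := by
  have htel : ∏ i ∈ range N, v (i + 1) / v i = v N / v 0 := by
    induction N with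
    | zero => simp [div_self (hv 0 le_rfl)]
    | succ n ih =>
      rw [prod_range_succ, ih fun i hi => hv i (by omega)]
      field_simp [hv n (by omega)]
  rw [← htel, norm_prod, discreteWinding, ofReal_sum, sum_mul, exp_sum, ofReal_prod,
    ← prod_mul_distrib]
  exact prod_congr rfl fun i _ => (norm_mul_exp_arg_mul_I _).symm

theorem discreteWinding_ne_zero {v : ℕ → ℂ} {N : ℕ} (hv : ∀ i ≤ N, v i ≠ 0)
    (h0 : (v 0).re < 0) (hN : 0 < (v N).re) : discreteWinding v N ≠ 0 := by
  intro hW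
  have h := div_eq_norm_mul_exp_discreteWinding hv
  rw [hW, ofReal_zero, zero_mul, exp_zero, mul_one, div_eq_iff (hv 0 (Nat.zero_le N))] at h
  have hre := congrArg re h
  rw [re_ofReal_mul] at hre
  nlinarith [norm_nonneg (v N / v 0)]

theorem discreteWinding_eq_arg_sub_arg {v : ℕ → ℂ} {N : ℕ} (hv : ∀ i ≤ N, v i ≠ 0)
    (hstep : ∀ i < N, arg (v (i + 1)) - arg (v i) ∈ Set.Ioc (-π) π) :
    discreteWinding v N = arg (v N) - arg (v 0) := by
  rw [discreteWinding, ← sum_range_sub (fun i => arg (v i))]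
  exact sum_congr rfl fun i hi => arg_div_eq_sub_arg (hv _ (mem_range.1 hi))
    (hv _ (mem_range.1 hi).le) (hstep i (mem_range.1 hi))

theorem discreteWinding_pos_of_im_neg {v : ℕ → ℂ} {N : ℕ} (him : ∀ i ≤ N, (v i).im < 0)
    (h0 : (v 0).re < 0) (hN : 0 < (v N).re) : 0 < discreteWinding v N := by
  have hv i (hi : i ≤ N) : v i ≠ 0 := fun h => by simpa [h] using him i hi
  have harg i (hi : i ≤ N) : arg (v i) ∈ Set.Ioo (-π) 0 :=
    ⟨neg_pi_lt_arg _, arg_neg_iff.2 (him i hi)⟩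
  rw [discreteWinding_eq_arg_sub_arg hv fun i hi => by
    obtain ⟨a₁, a₂⟩ := harg i hi.le
    obtain ⟨b₁, b₂⟩ := harg (i + 1) hi
    constructor <;> linarith]
  have h0' : π / 2 ≤ |arg (v 0)| :=
    not_lt.1 <| abs_arg_lt_pi_div_two_iff.not.2 (not_or.2 ⟨h0.not_gt, hv 0 (Nat.zero_le N)⟩)
  rw [abs_of_neg (harg 0 (Nat.zero_le N)).2] at h0'
  linarith [(abs_lt.1 (abs_arg_lt_pi_div_two_iff.2 (Or.inl hN))).1]

theorem discreteWinding_neg_of_im_pos {v : ℕ → ℂ} {N : ℕ} (him : ∀ i ≤ N, 0 < (v i).im)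
    (h0 : (v 0).re < 0) (hN : 0 < (v N).re) : discreteWinding v N < 0 := by
  have hv i (hi : i ≤ N) : v i ≠ 0 := fun h => by simpa [h] using him i hi
  have harg i (hi : i ≤ N) : arg (v i) ∈ Set.Ioo 0 π :=
    ⟨lt_of_le_of_ne (arg_nonneg_iff.2 (him i hi).le) fun h =>
      (him i hi).ne' (arg_eq_zero_iff.1 h.symm).2,
    arg_lt_pi_iff.2 (Or.inr (him i hi).ne')⟩
  rw [discreteWinding_eq_arg_sub_arg hv fun i hi => by
    obtain ⟨a₁, a₂⟩ := harg i hi.le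
    obtain ⟨b₁, b₂⟩ := harg (i + 1) hi
    constructor <;> linarith]
  have h0' : π / 2 ≤ |arg (v 0)| :=
    not_lt.1 <| abs_arg_lt_pi_div_two_iff.not.2 (not_or.2 ⟨h0.not_gt, hv 0 (Nat.zero_le N)⟩)
  rw [abs_of_pos (harg 0 (Nat.zero_le N)).1] at h0'
  linarith [(abs_lt.1 (abs_arg_lt_pi_div_two_iff.2 (Or.inl hN))).2]

theorem continuousOn_discreteWinding_sub {p : ℕ → ℂ} {N : ℕ} {S : Set ℂ}
    (hq : ∀ z ∈ S, ∀ i < N, 0 < ((p (i + 1) - z) / (p i - z)).re) :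
    ContinuousOn (fun z => discreteWinding (fun i => p i - z) N) S := by
  refine continuousOn_finsetSum _ fun i hi z hz => ContinuousAt.continuousWithinAt ?_
  have hslit := mem_slitPlane_iff.2 (Or.inl (hq z hz i (mem_range.1 hi)))
  show ContinuousAt (fun z => arg ((p (i + 1) - z) / (p i - z))) z
  have hdiv : ContinuousAt (fun z => (p (i + 1) - z) / (p i - z)) z :=
    ContinuousAt.div (by fun_prop) (by fun_prop) (div_ne_zero_iff.1 (slitPlane_ne_zero hslit)).2
  exact ContinuousAt.comp (g := arg) (continuousAt_arg hslit) hdiv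

theorem exists_mem_of_crosses_strip {S : Set ℂ} (hS : IsCompact S) (hSc : IsPreconnected S)
    {zb zt : ℂ} (hzb : zb ∈ S) (hzt : zt ∈ S) {g : ℝ → ℂ} (hg : ContinuousOn g (Set.Icc 0 1))
    (him : ∀ τ ∈ Set.Icc (0 : ℝ) 1, zb.im < (g τ).im ∧ (g τ).im < zt.im)
    (h0 : ∀ z ∈ S, (g 0).re < z.re) (h1 : ∀ z ∈ S, z.re < (g 1).re) :
    ∃ τ ∈ Set.Icc (0 : ℝ) 1, g τ ∈ S := by
  by_contra! hgS
  obtain ⟨N, hN, hstep⟩ := exists_nat_dist_sample_lt_dist hg hS.isClosed hgS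
  set p : ℕ → ℂ := fun i => g (i / N)
  have hmem {i : ℕ} (hi : i ≤ N) : (i / N : ℝ) ∈ Set.Icc 0 1 :=
    ⟨by positivity, div_le_one_of_le₀ (by exact_mod_cast hi) (by positivity)⟩
  have hp0 : p 0 = g 0 := by simp [p]
  have hpN : p N = g 1 := by simp [p, div_self (Nat.cast_ne_zero.2 hN.ne' : (N : ℝ) ≠ 0)]
  have hv : ∀ z ∈ S, ∀ i ≤ N, p i - z ≠ 0 := fun z hz i hi =>
    sub_ne_zero.2 fun h => hgS _ (hmem hi) (by rwa [← h] at hz)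
  have hq : ∀ z ∈ S, ∀ i < N, 0 < ((p (i + 1) - z) / (p i - z)).re := fun z hz i hi =>
    re_div_pos_of_norm_sub_lt <| by
      simpa only [sub_sub_sub_cancel_right, ← dist_eq] using hstep i hi z hz
  have hWt : 0 < discreteWinding (fun i => p i - zt) N :=
    discreteWinding_pos_of_im_neg (fun i hi => by simpa using (him _ (hmem hi)).2)
      (by simpa [hp0] using h0 zt hzt) (by simpa [hpN] using h1 zt hzt)
  have hWb : discreteWinding (fun i => p i - zb) N < 0 :=
    discreteWinding_neg_of_im_pos (fun i hi => by simpa using (him _ (hmem hi)).1)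
      (by simpa [hp0] using h0 zb hzb) (by simpa [hpN] using h1 zb hzb)
  obtain ⟨z, hz, hWz⟩ := hSc.intermediate_value hzb hzt (continuousOn_discreteWinding_sub hq)
    ⟨hWb.le, hWt.le⟩
  exact discreteWinding_ne_zero (hv z hz) (by simpa [hp0] using h0 z hz)
    (by simpa [hpN] using h1 z hz) hWz

end Complex

theorem edist_add_edist_le_eVariationOn {α E : Type*} [LinearOrder α] [PseudoEMetricSpace E]
    (f : α → E) {a b c : α} (hab : a ≤ b) (hbc : b ≤ c) :
    edist (f a) (f b) + edist (f b) (f c) ≤ eVariationOn f (Set.Icc a c) := by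
  have := eVariationOn.Icc_add_Icc f hab hbc (Set.mem_univ b)
  simp only [Set.univ_inter] at this
  rw [← this]
  exact add_le_add (eVariationOn.edist_le f ⟨le_rfl, hab⟩ ⟨hab, le_rfl⟩)
    (eVariationOn.edist_le f ⟨le_rfl, hbc⟩ ⟨hbc, le_rfl⟩)

theorem dist_add_dist_le_of_eVariationOn_eq_ofReal {α E : Type*} [LinearOrder α]
    [MetricSpace E] {f : α → E} {a b c : α} {L : ℝ}
    (hL : eVariationOn f (Set.Icc a c) = ENNReal.ofReal L) (hab : a ≤ b) (hbc : b ≤ c)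
    (hac : f a ≠ f c) : dist (f a) (f b) + dist (f b) (f c) ≤ L := by
  have h := edist_add_edist_le_eVariationOn f hab hbc
  rw [hL, edist_dist, edist_dist, ← ENNReal.ofReal_add dist_nonneg dist_nonneg] at h
  refine (ENNReal.ofReal_le_ofReal_iff'.1 h).resolve_right (not_le.2 ?_)
  exact (dist_pos.2 hac).trans_le (dist_triangle _ _ _)

theorem abs_sub_add_abs_sub_le_sqrt_two_mul_dist (u w : EuclideanSpace ℝ (Fin 2)) :
    |u 0 - w 0| + |u 1 - w 1| ≤ √2 * dist u w := by
  rw [EuclideanSpace.dist_eq, Fin.sum_univ_two, Real.dist_eq, Real.dist_eq, ← Real.sqrt_mul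
    zero_le_two, Real.le_sqrt (by positivity) (by positivity), sq_abs, sq_abs]
  nlinarith [sq_nonneg (|u 0 - w 0| - |u 1 - w 1|), sq_abs (u 0 - w 0), sq_abs (u 1 - w 1)]

theorem min_staircase_le_sqrt_two_mul {s p t : EuclideanSpace ℝ (Fin 2)} {ylo yhi L : ℝ}
    (hp : p 1 ≤ ylo ∨ yhi ≤ p 1) (hL : dist s p + dist p t ≤ L) :
    min ((yhi - s 1) + (t 0 - s 0) + (yhi - t 1))
        ((s 1 - ylo) + (t 0 - s 0) + (t 1 - ylo)) ≤ √2 * L := by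
  have hs := abs_sub_add_abs_sub_le_sqrt_two_mul_dist p s
  have ht := abs_sub_add_abs_sub_le_sqrt_two_mul_dist t p
  rw [dist_comm] at hs ht
  have hsqrt : √2 * (dist s p + dist p t) ≤ √2 * L := by gcongr
  have := le_abs_self (p 0 - s 0)
  have := le_abs_self (t 0 - p 0)
  rcases hp with hlo | hhi
  · have := neg_abs_le (p 1 - s 1)
    have := le_abs_self (t 1 - p 1)
    exact (min_le_right _ _).trans (by linarith)
  · have := le_abs_self (p 1 - s 1)
    have := neg_abs_le (t 1 - p 1)
    exact (min_le_left _ _).trans (by linarith)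

theorem interior_closedBox (xlo xhi ylo yhi : ℝ) :
    interior (closedBox xlo xhi ylo yhi) =
      {p | xlo < p 0 ∧ p 0 < xhi ∧ ylo < p 1 ∧ p 1 < yhi} := by
  have hopen (i : Fin 2) : IsOpenMap (EuclideanSpace.proj i : EuclideanSpace ℝ (Fin 2) → ℝ) :=
    ContinuousLinearMap.isOpenMap _ fun c => ⟨EuclideanSpace.single i c, by simp⟩
  have hbox : closedBox xlo xhi ylo yhi = EuclideanSpace.proj (0 : Fin 2) ⁻¹' Set.Icc xlo xhi ∩
      EuclideanSpace.proj (1 : Fin 2) ⁻¹' Set.Icc ylo yhi := by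
    ext p; simp [closedBox, and_assoc]
  rw [hbox, interior_inter, ← (hopen 0).preimage_interior_eq_interior_preimage (by fun_prop),
    ← (hopen 1).preimage_interior_eq_interior_preimage (by fun_prop), interior_Icc, interior_Icc]
  ext p; simp [and_assoc]

theorem EuclideanSpace.apply_eq_of_mem_segment {ι : Type*} {a b q : EuclideanSpace ℝ ι} {i : ι}
    (hq : q ∈ segment ℝ a b) (hab : a i = b i) : q i = a i := by
  obtain ⟨u, v, -, -, huv, rfl⟩ := hq
  simp [hab, ← add_mul, huv]

theorem staircase_notMem_interior_closedBox {s t : EuclideanSpace ℝ (Fin 2)}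
    {xlo xhi ylo yhi c : ℝ} (hs : s 0 < xlo) (ht : xhi < t 0) (hc : c ≤ ylo ∨ yhi ≤ c) :
    ∀ q ∈ segment ℝ s (planePt (s 0) c) ∪ segment ℝ (planePt (s 0) c) (planePt (t 0) c) ∪
        segment ℝ (planePt (t 0) c) t,
      q ∉ interior (closedBox xlo xhi ylo yhi) := by
  rintro q ((hq | hq) | hq) hqi
  all_goals
    rw [interior_closedBox] at hqi
    obtain ⟨hx₁, hx₂, hy₁, hy₂⟩ := hqi
  · linarith [EuclideanSpace.apply_eq_of_mem_segment (i := 0) hq (planePt_zero _ _).symm]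
  · have hq1 := EuclideanSpace.apply_eq_of_mem_segment (i := 1) hq (by simp)
    rw [planePt_one] at hq1
    rcases hc with hc | hc <;> linarith
  · have hq0 := EuclideanSpace.apply_eq_of_mem_segment (i := 0) hq (planePt_zero _ _)
    rw [planePt_zero] at hq0
    linarith

theorem exists_height_le_or_ge_of_avoids {K : Set (EuclideanSpace ℝ (Fin 2))} (hK : IsCompact K)
    (hKc : IsPreconnected K) {pb pt : EuclideanSpace ℝ (Fin 2)} (hpb : pb ∈ K) (hpt : pt ∈ K)
    {γ : ℝ → EuclideanSpace ℝ (Fin 2)} (hγ : ContinuousOn γ (Set.Icc 0 1))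
    (h0 : ∀ p ∈ K, γ 0 0 < p 0) (h1 : ∀ p ∈ K, p 0 < γ 1 0)
    (hdisj : ∀ τ ∈ Set.Icc (0 : ℝ) 1, γ τ ∉ K) :
    ∃ τ ∈ Set.Icc (0 : ℝ) 1, γ τ 1 ≤ pb 1 ∨ pt 1 ≤ γ τ 1 := by
  by_contra! hstrip
  let e := Complex.orthonormalBasisOneI.repr.symm
  have hre (p) : (e p).re = p 0 := by simp [e, Complex.orthonormalBasisOneI_repr_symm_apply]
  have him (p) : (e p).im = p 1 := by simp [e, Complex.orthonormalBasisOneI_repr_symm_apply]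
  obtain ⟨τ, hτ, p, hp, hpτ⟩ := Complex.exists_mem_of_crosses_strip (hK.image e.continuous)
    (hKc.image e e.continuous.continuousOn) (Set.mem_image_of_mem e hpb)
    (Set.mem_image_of_mem e hpt) (e.continuous.comp_continuousOn hγ)
    (fun τ hτ => by simpa only [Function.comp, him] using hstrip τ hτ)
    (by simpa only [Set.forall_mem_image, Function.comp, hre] using h0)
    (by simpa only [Set.forall_mem_image, Function.comp, hre] using h1)
  exact hdisj τ hτ (e.injective hpτ ▸ hp)

theorem staircase_around_bbox_sqrt_two_competitive_general
    (K : Set (EuclideanSpace ℝ (Fin 2)))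
    (hne : K.Nonempty) (hcpt : IsCompact K) (hconn : IsConnected K)
    (xlo xhi ylo yhi : ℝ)
    (hxlo : xlo = sInf ((fun p : EuclideanSpace ℝ (Fin 2) => p 0) '' K))
    (hxhi : xhi = sSup ((fun p : EuclideanSpace ℝ (Fin 2) => p 0) '' K))
    (hylo : ylo = sInf ((fun p : EuclideanSpace ℝ (Fin 2) => p 1) '' K))
    (hyhi : yhi = sSup ((fun p : EuclideanSpace ℝ (Fin 2) => p 1) '' K))
    (s t : EuclideanSpace ℝ (Fin 2))
    (hs0 : s 0 < xlo) (ht0 : xhi < t 0)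
    (γ : ℝ → EuclideanSpace ℝ (Fin 2))
    (hγ : ContinuousOn γ (Set.Icc 0 1)) (hγ0 : γ 0 = s) (hγ1 : γ 1 = t)
    (hdisj : ∀ τ ∈ Set.Icc (0 : ℝ) 1, γ τ ∉ K)
    (L : ℝ) (hL : eVariationOn γ (Set.Icc 0 1) = ENNReal.ofReal L) :
    min ((yhi - s 1) + (t 0 - s 0) + (yhi - t 1))
        ((s 1 - ylo) + (t 0 - s 0) + (t 1 - ylo)) ≤ Real.sqrt 2 * L ∧
    (∀ q ∈ segment ℝ s (planePt (s 0) yhi) ∪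
            segment ℝ (planePt (s 0) yhi) (planePt (t 0) yhi) ∪
            segment ℝ (planePt (t 0) yhi) t,
        q ∉ interior (closedBox xlo xhi ylo yhi)) ∧
    (∀ q ∈ segment ℝ s (planePt (s 0) ylo) ∪
            segment ℝ (planePt (s 0) ylo) (planePt (t 0) ylo) ∪
            segment ℝ (planePt (t 0) ylo) t,
        q ∉ interior (closedBox xlo xhi ylo yhi)) := by
  refine ⟨?_, staircase_notMem_interior_closedBox hs0 ht0 (Or.inr le_rfl),
    staircase_notMem_interior_closedBox hs0 ht0 (Or.inl le_rfl)⟩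
  subst hγ0 hγ1
  have hKx := hcpt.image (f := fun p : EuclideanSpace ℝ (Fin 2) => p 0) (by fun_prop)
  have hKy := hcpt.image (f := fun p : EuclideanSpace ℝ (Fin 2) => p 1) (by fun_prop)
  have hx : ∀ p ∈ K, xlo ≤ p 0 ∧ p 0 ≤ xhi := fun p hp =>
    ⟨hxlo ▸ csInf_le hKx.bddBelow ⟨p, hp, rfl⟩, hxhi ▸ le_csSup hKx.bddAbove ⟨p, hp, rfl⟩⟩
  obtain ⟨pb, hpb, hpb1 : pb 1 = ylo⟩ := hylo ▸ hKy.sInf_mem (hne.image _)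
  obtain ⟨pt, hpt, hpt1 : pt 1 = yhi⟩ := hyhi ▸ hKy.sSup_mem (hne.image _)
  obtain ⟨τ, hτ, hvisit⟩ := exists_height_le_or_ge_of_avoids hcpt hconn.isPreconnected hpb hpt hγ
    (fun p hp => hs0.trans_le (hx p hp).1) (fun p hp => (hx p hp).2.trans_lt ht0) hdisj
  have hst : γ 0 ≠ γ 1 := fun h => by linarith [h ▸ hs0, hx pb hpb]
  rw [hpb1, hpt1] at hvisit
  exact min_staircase_le_sqrt_two_mul hvisit
    (dist_add_dist_le_of_eVariationOn_eq_ofReal hL hτ.1 hτ.2 hst)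

/-- Routing around a single bounding box is `√2`-competitive: if a continuous path of
length (total variation) `L` from `s` to `t` avoids a nonempty compact connected set `K`,
where `s` lies strictly left and `t` strictly right of `K`'s bounding box and both lie
within its vertical range, then the shorter of the two staircase paths over the top edge
or under the bottom edge of the box has length at most `√2 * L`; moreover both staircase
paths avoid the interior of the bounding box. -/
theorem staircase_around_bbox_sqrt_two_competitive
    (K : Set (EuclideanSpace ℝ (Fin 2)))
    (hne : K.Nonempty) (hcpt : IsCompact K) (hconn : IsConnected K)
    (xlo xhi ylo yhi : ℝ)
    (hxlo : xlo = sInf ((fun p : EuclideanSpace ℝ (Fin 2) => p 0) '' K))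
    (hxhi : xhi = sSup ((fun p : EuclideanSpace ℝ (Fin 2) => p 0) '' K))
    (hylo : ylo = sInf ((fun p : EuclideanSpace ℝ (Fin 2) => p 1) '' K))
    (hyhi : yhi = sSup ((fun p : EuclideanSpace ℝ (Fin 2) => p 1) '' K))
    (s t : EuclideanSpace ℝ (Fin 2))
    (hs0 : s 0 < xlo) (ht0 : xhi < t 0)
    (hs1lo : ylo ≤ s 1) (hs1hi : s 1 ≤ yhi) (ht1lo : ylo ≤ t 1) (ht1hi : t 1 ≤ yhi)
    (γ : ℝ → EuclideanSpace ℝ (Fin 2))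
    (hγ : ContinuousOn γ (Set.Icc 0 1)) (hγ0 : γ 0 = s) (hγ1 : γ 1 = t)
    (hdisj : ∀ τ ∈ Set.Icc (0 : ℝ) 1, γ τ ∉ K)
    (L : ℝ) (hL : eVariationOn γ (Set.Icc 0 1) = ENNReal.ofReal L) :
    min ((yhi - s 1) + (t 0 - s 0) + (yhi - t 1))
        ((s 1 - ylo) + (t 0 - s 0) + (t 1 - ylo)) ≤ Real.sqrt 2 * L ∧
    (∀ q ∈ segment ℝ s (planePt (s 0) yhi) ∪
            segment ℝ (planePt (s 0) yhi) (planePt (t 0) yhi) ∪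
            segment ℝ (planePt (t 0) yhi) t,
        q ∉ interior (closedBox xlo xhi ylo yhi)) ∧
    (∀ q ∈ segment ℝ s (planePt (s 0) ylo) ∪
            segment ℝ (planePt (s 0) ylo) (planePt (t 0) ylo) ∪
            segment ℝ (planePt (t 0) ylo) t,
        q ∉ interior (closedBox xlo xhi ylo yhi)) :=
  staircase_around_bbox_sqrt_two_competitive_general K hne hcpt hconn xlo xhi ylo yhi hxlo hxhi hylo
    hyhi s t hs0 ht0 γ hγ hγ0 hγ1 hdisj L hL
end
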